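/- arXiv:1905.11317 — 9 statements merged into one kernel-verified Lean document; each statement's English description precedes it below -/
import Mathlib

section
/- For any real inner product space V, any self-adjoint linear operator T on V, and any vectors b, b̃ ∈ V with ‖b‖ = ‖b̃‖ = 1, if ⟨b, T b⟩ = 1 and all eigenvalues of T lie in [-1,1] (i.e. ‖T‖ ≤ 1), then ‖T(b − b̃)‖ + ⟨b, T b̃⟩ ≤ 3/2. -/
open RealInnerProductSpace

/-- For a self-adjoint operator `T` with `‖T‖ ≤ 1` on a finite-dimensional real
inner product space and unit vectors `b, b̃` with `⟪b, T b⟫ = 1`, one has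
`‖T (b − b̃)‖ + ⟪b, T b̃⟫ ≤ 3/2`. -/
theorem stmt_1 {V : Type*} [NormedAddCommGroup V] [InnerProductSpace ℝ V]
    [FiniteDimensional ℝ V] (T : V →L[ℝ] V)
    (hsym : ∀ x y : V, ⟪T x, y⟫ = ⟪x, T y⟫) (hnorm : ‖T‖ ≤ 1)
    (b btil : V) (hb : ‖b‖ = 1) (hbtil : ‖btil‖ = 1)
    (hperf : ⟪b, T b⟫ = 1) :
    ‖T (b - btil)‖ + ⟪b, T btil⟫ ≤ 3 / 2 := by
  -- Step 1: T b = b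
  have hTbnorm : ‖T b‖ ≤ 1 := by
    calc ‖T b‖ ≤ ‖T‖ * ‖b‖ := T.le_opNorm b
    _ ≤ 1 := by rw [hb]; simpa using hnorm
  have hTb : T b = b := by
    have key : ⟪T b - b, T b - b⟫ ≤ 0 := by
      rw [real_inner_sub_sub_self]
      have h1 : ⟪T b, b⟫ = 1 := by rw [real_inner_comm]; exact hperf
      have h2 : ⟪T b, T b⟫ ≤ 1 := by
        rw [real_inner_self_eq_norm_sq]
        nlinarith [norm_nonneg (T b)]
      have h3 : ⟪b, b⟫ = 1 := by
        rw [real_inner_self_eq_norm_sq, hb]; norm_num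
      nlinarith
    have := real_inner_self_nonpos (x := T b - b)
    rw [sub_eq_zero] at this
    exact this.mp key
  -- Step 2: ⟪b, T btil⟫ = ⟪b, btil⟫
  have hip : ⟪b, T btil⟫ = ⟪b, btil⟫ := by
    rw [← hsym b btil, hTb]
  -- Step 3: bounds
  have hle : ‖T (b - btil)‖ ≤ ‖b - btil‖ := by
    calc ‖T (b - btil)‖ ≤ ‖T‖ * ‖b - btil‖ := T.le_opNorm _
    _ ≤ 1 * ‖b - btil‖ := by
        exact mul_le_mul_of_nonneg_right hnorm (norm_nonneg _)
    _ = ‖b - btil‖ := one_mul _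
  have hd : ‖b - btil‖ ^ 2 = 2 - 2 * ⟪b, btil⟫ := by
    rw [norm_sub_sq_real, hb, hbtil]; ring
  have hr0 : (0:ℝ) ≤ ‖T (b - btil)‖ := norm_nonneg _
  have hd0 : (0:ℝ) ≤ ‖b - btil‖ := norm_nonneg _
  rw [hip]
  nlinarith [sq_nonneg (‖T (b - btil)‖ - 1), sq_nonneg (‖b - btil‖ - ‖T (b - btil)‖)]
end

section
/- For any real inner product space V, any self-adjoint operator T with ‖T‖ ≤ 1, and unit vectors a, b, b̃ ∈ V satisfying ⟨b, T b⟩ = 1, the inequality |⟨a, T(b − b̃)⟩| + ⟨b, T b̃⟩ ≤ 3/2 holds. -/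
/-!
Since `‖T‖ ≤ 1`, Cauchy–Schwarz turns `⟪b, T b⟫ = 1` into `T b = b`, so `T (b - b̃) = b - T b̃`.
Writing `c = ⟪b, T b̃⟫`, expanding the square gives `‖b - T b̃‖² ≤ 2 - 2c`, and then
`|⟪a, b - T b̃⟫| + c ≤ r + 1 - r²/2 ≤ 3/2` with `r = ‖b - T b̃‖`.
-/

open RealInnerProductSpace

section

variable {E : Type*} [NormedAddCommGroup E] [InnerProductSpace ℝ E]

theorem ContinuousLinearMap.apply_eq_self_of_inner_apply_eq_one {T : E →L[ℝ] E} (hT : ‖T‖ ≤ 1)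
    {x : E} (hx : ‖x‖ = 1) (h : ⟪x, T x⟫ = 1) : T x = x := by
  have hTx_le : ‖T x‖ ≤ 1 := by simpa [hx] using T.le_of_opNorm_le hT x
  have hTx_ge : 1 ≤ ‖T x‖ := by simpa [h, hx] using real_inner_le_norm x (T x)
  exact ((inner_eq_one_iff_of_norm_eq_one hx (le_antisymm hTx_le hTx_ge)).mp h).symm

theorem norm_sub_sq_le_two_sub_two_inner {x y : E} (hx : ‖x‖ = 1) (hy : ‖y‖ ≤ 1) :
    ‖x - y‖ ^ 2 ≤ 2 - 2 * ⟪x, y⟫ := by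
  rw [norm_sub_sq_real, hx]
  nlinarith [norm_nonneg y]

theorem add_le_three_halves_of_sq_le {r c : ℝ} (h : r ^ 2 ≤ 2 - 2 * c) : r + c ≤ 3 / 2 := by
  nlinarith [sq_nonneg (r - 1)]

end

theorem stmt_2_general {V : Type*} [NormedAddCommGroup V] [InnerProductSpace ℝ V]
    (T : V →L[ℝ] V)
    (hnorm : ‖T‖ ≤ 1)
    (a b btil : V) (ha : ‖a‖ = 1) (hb : ‖b‖ = 1) (hbtil : ‖btil‖ = 1)
    (hperf : ⟪b, T b⟫ = 1) :
    |⟪a, T (b - btil)⟫| + ⟪b, T btil⟫ ≤ 3 / 2 := by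
  have hTb : T b = b := T.apply_eq_self_of_inner_apply_eq_one hnorm hb hperf
  have hTbtil : ‖T btil‖ ≤ 1 := by simpa [hbtil] using T.le_of_opNorm_le hnorm btil
  have hinner : |⟪a, T (b - btil)⟫| ≤ ‖b - T btil‖ := by
    simpa [ha, map_sub, hTb] using abs_real_inner_le_norm a (T (b - btil))
  calc |⟪a, T (b - btil)⟫| + ⟪b, T btil⟫ ≤ ‖b - T btil‖ + ⟪b, T btil⟫ := by gcongr
    _ ≤ 3 / 2 := add_le_three_halves_of_sq_le (norm_sub_sq_le_two_sub_two_inner hb hTbtil)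

/-- For a self-adjoint operator `T` with `‖T‖ ≤ 1` and unit vectors `a, b, b̃`
with `⟪b, T b⟫ = 1`, one has `|⟪a, T (b − b̃)⟫| + ⟪b, T b̃⟫ ≤ 3/2`. -/
theorem stmt_2 {V : Type*} [NormedAddCommGroup V] [InnerProductSpace ℝ V]
    [FiniteDimensional ℝ V] (T : V →L[ℝ] V)
    (hsym : ∀ x y : V, ⟪T x, y⟫ = ⟪x, T y⟫) (hnorm : ‖T‖ ≤ 1)
    (a b btil : V) (ha : ‖a‖ = 1) (hb : ‖b‖ = 1) (hbtil : ‖btil‖ = 1)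
    (hperf : ⟪b, T b⟫ = 1) :
    |⟪a, T (b - btil)⟫| + ⟪b, T btil⟫ ≤ 3 / 2 :=
  stmt_2_general T hnorm a b btil ha hb hbtil hperf
end

section
/- Let T be a self-adjoint operator on a finite-dimensional real inner product space with ‖T‖ ≤ 1 and let b be a unit vector with ⟨b, T b⟩ = −1. Then b is an eigenvector of T with eigenvalue −1, and for any unit vectors a, b̃: |⟨a, T(b − b̃)⟩| − ⟨b, T b̃⟩ ≤ 3/2. -/
/-!
Since `‖T b‖ ≤ 1` and `⟪b, T b⟫ = -1`, Cauchy–Schwarz is an equality, so `T b = -b`. Then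
`T (b - b̃) = -(b + T b̃)`, and the claim reduces to `‖b + y‖ - ⟪b, y⟫ ≤ 3/2` for `y = T b̃` in the
unit ball: writing `s = ⟪b, y⟫`, we have `‖b + y‖ ≤ √(2 + 2 s) ≤ 3/2 + s`.
-/

open RealInnerProductSpace

section UnitBall

variable {F : Type*} [NormedAddCommGroup F] [InnerProductSpace ℝ F]

theorem eq_neg_of_norm_le_one_of_inner_eq_neg_one {x y : F} (hx : ‖x‖ = 1) (hy : ‖y‖ ≤ 1)
    (h : ⟪x, y⟫ = -1) : y = -x := by
  have hy_one : ‖y‖ = 1 := by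
    have := (abs_le.mp ((abs_real_inner_le_norm x y).trans_eq (by rw [hx, one_mul]))).1
    linarith
  rw [(inner_eq_neg_one_iff_of_norm_eq_one hx hy_one).mp h, neg_neg]

theorem norm_add_sub_inner_le_three_halves {x y : F} (hx : ‖x‖ = 1) (hy : ‖y‖ ≤ 1) :
    ‖x + y‖ - ⟪x, y⟫ ≤ 3 / 2 := by
  have hsq : ‖x + y‖ ^ 2 ≤ 2 + 2 * ⟪x, y⟫ := by
    rw [norm_add_sq_real, hx]
    nlinarith [norm_nonneg y]
  -- `(3/2 + s)² - (2 + 2 s) = (s + 1/2)²`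
  nlinarith [norm_nonneg (x + y), sq_nonneg (⟪x, y⟫ + 1 / 2)]

end UnitBall

theorem stmt_4_general {V : Type*} [NormedAddCommGroup V] [InnerProductSpace ℝ V]
    (T : V →L[ℝ] V)
    (hnorm : ‖T‖ ≤ 1)
    (b : V) (hb : ‖b‖ = 1) (hperf : ⟪b, T b⟫ = -1) :
    T b = -b ∧
      ∀ a btil : V, ‖a‖ = 1 → ‖btil‖ = 1 →
        |⟪a, T (b - btil)⟫| - ⟪b, T btil⟫ ≤ 3 / 2 := by
  have hTb : T b = -b :=
    eq_neg_of_norm_le_one_of_inner_eq_neg_one hb (T.unit_le_opNorm b hb.le |>.trans hnorm) hperf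
  refine ⟨hTb, fun a btil ha hbtil => ?_⟩
  have hTbtil : ‖T btil‖ ≤ 1 := T.unit_le_opNorm btil hbtil.le |>.trans hnorm
  have hdiff : T (b - btil) = -(b + T btil) := by rw [map_sub, hTb, neg_add, sub_eq_add_neg]
  have hcs : |⟪a, T (b - btil)⟫| ≤ ‖b + T btil‖ := by
    calc |⟪a, T (b - btil)⟫| ≤ ‖a‖ * ‖T (b - btil)‖ := abs_real_inner_le_norm _ _
      _ = ‖b + T btil‖ := by rw [ha, one_mul, hdiff, norm_neg]
  linarith [norm_add_sub_inner_le_three_halves hb hTbtil]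

/-- Perfect anticorrelation version: if `T` is self-adjoint with `‖T‖ ≤ 1` and
`b` is a unit vector with `⟪b, T b⟫ = −1`, then `T b = −b` and, for all unit
vectors `a, b̃`, `|⟪a, T (b − b̃)⟫| − ⟪b, T b̃⟫ ≤ 3/2`. -/
theorem stmt_4 {V : Type*} [NormedAddCommGroup V] [InnerProductSpace ℝ V]
    [FiniteDimensional ℝ V] (T : V →L[ℝ] V)
    (hsym : ∀ x y : V, ⟪T x, y⟫ = ⟪x, T y⟫) (hnorm : ‖T‖ ≤ 1)
    (b : V) (hb : ‖b‖ = 1) (hperf : ⟪b, T b⟫ = -1) :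
    T b = -b ∧
      ∀ a btil : V, ‖a‖ = 1 → ‖btil‖ = 1 →
        |⟪a, T (b - btil)⟫| - ⟪b, T btil⟫ ≤ 3 / 2 :=
  stmt_4_general T hnorm b hb hperf
end

section
/- For the two-qudit GHZ state ρ_ghz on ℂ^d ⊗ ℂ^d and any two distinct Gell-Mann generators Λ_n ≠ Λ_m from the standard family {Λ^s_{jk}, Λ^{as}_{jk}, Λ^d_l}, the correlation matrix entry tr[ρ_ghz (Λ_n ⊗ Λ_m)] = 0; hence the correlation matrix T_{ρ_ghz} is diagonal. -/
open Matrix Kronecker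

/-- The two-qudit GHZ state `ρ = (1/d) Σ_{j,k} |j⟩⟨k| ⊗ |j⟩⟨k|`. -/
noncomputable def ghz (d : ℕ) : Matrix (Fin d × Fin d) (Fin d × Fin d) ℂ :=
  (1 / (d : ℂ)) •
    ∑ j : Fin d, ∑ k : Fin d,
      (Matrix.single j k (1 : ℂ)) ⊗ₖ (Matrix.single j k (1 : ℂ))

/-- Index type for the `d²−1` generalized Gell-Mann generators: symmetric ones
(indexed by pairs `m < k`), antisymmetric ones (pairs `m < k`) and diagonal
ones (indexed by `l` with `1 ≤ l`). -/
def GMIdx (d : ℕ) : Type :=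
  {p : Fin d × Fin d // p.1 < p.2} ⊕ {p : Fin d × Fin d // p.1 < p.2} ⊕
    {l : Fin d // 1 ≤ (l : ℕ)}

/-- The generalized Gell-Mann generators `Λ^s_{mk}`, `Λ^{as}_{mk}`, `Λ^d_l`. -/
noncomputable def gellMann {d : ℕ} : GMIdx d → Matrix (Fin d) (Fin d) ℂ
  | Sum.inl ⟨(m, k), _⟩ =>
      Matrix.single m k (1 : ℂ) + Matrix.single k m (1 : ℂ)
  | Sum.inr (Sum.inl ⟨(m, k), _⟩) =>
      (-Complex.I) • Matrix.single m k (1 : ℂ) +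
        Complex.I • Matrix.single k m (1 : ℂ)
  | Sum.inr (Sum.inr ⟨l, _⟩) =>
      Matrix.diagonal (fun i : Fin d =>
        if (i : ℕ) < (l : ℕ) then (Real.sqrt (2 / ((l : ℕ) * ((l : ℕ) + 1))) : ℂ)
        else if (i : ℕ) = (l : ℕ) then
          -((l : ℕ) : ℂ) * (Real.sqrt (2 / ((l : ℕ) * ((l : ℕ) + 1))) : ℂ)
        else 0)

/- ### Auxiliary lemmas -/

lemma trace_std_aux (d : ℕ) (j k : Fin d) (A : Matrix (Fin d) (Fin d) ℂ) :
    (Matrix.single j k (1 : ℂ) * A).trace = A k j := by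
  simp [Matrix.trace, Matrix.diag, Matrix.mul_apply, Matrix.single, ite_and]

lemma trace_ghz_kron_aux (d : ℕ) (A B : Matrix (Fin d) (Fin d) ℂ) :
    (ghz d * (A ⊗ₖ B)).trace
      = (1 / (d : ℂ)) * ∑ j : Fin d, ∑ k : Fin d, A k j * B k j := by
  simp only [ghz, Matrix.smul_mul, Matrix.trace_smul, Matrix.sum_mul,
    Matrix.trace_sum, ← Matrix.mul_kronecker_mul, Matrix.trace_kronecker,
    trace_std_aux, smul_eq_mul]

lemma sum_key_aux (d L : ℕ) (hL : L < d) (a : ℂ) :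
    ∑ i ∈ Finset.range d, (if i < L then a else if i = L then -(L:ℂ) * a else 0) = 0 := by
  have h1 : ∀ i ∈ Finset.range d,
      (if i < L then a else if i = L then -(L:ℂ) * a else 0)
        = (if i < L then a else 0) + (if i = L then -(L:ℂ) * a else 0) := by
    intro i _; split_ifs <;> first | ring1 | omega
  rw [Finset.sum_congr rfl h1, Finset.sum_add_distrib, ← Finset.sum_filter,
    Finset.sum_ite_eq' (Finset.range d) L]
  simp only [Finset.mem_range.mpr hL, if_true]
  rw [Finset.range_eq_Ico, Finset.Ico_filter_lt, min_eq_right hL.le]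
  simp [Finset.sum_const]

noncomputable def dEnt (d : ℕ) (l : Fin d) : Fin d → ℂ := fun i =>
  if (i : ℕ) < (l : ℕ) then (Real.sqrt (2 / ((l : ℕ) * ((l : ℕ) + 1))) : ℂ)
  else if (i : ℕ) = (l : ℕ) then
    -((l : ℕ) : ℂ) * (Real.sqrt (2 / ((l : ℕ) * ((l : ℕ) + 1))) : ℂ)
  else 0

lemma diagdiag_lt_aux (d : ℕ) (l l' : Fin d) (h : (l:ℕ) < (l':ℕ)) :
    ∑ i : Fin d, dEnt d l i * dEnt d l' i = 0 := by
  have key : ∀ i : Fin d, dEnt d l i * dEnt d l' i =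
      (if (i:ℕ) < (l:ℕ) then (Real.sqrt (2 / ((l : ℕ) * ((l : ℕ) + 1))) : ℂ) * (Real.sqrt (2 / ((l' : ℕ) * ((l' : ℕ) + 1))) : ℂ)
       else if (i:ℕ) = (l:ℕ) then -((l : ℕ) : ℂ) * ((Real.sqrt (2 / ((l : ℕ) * ((l : ℕ) + 1))) : ℂ) * (Real.sqrt (2 / ((l' : ℕ) * ((l' : ℕ) + 1))) : ℂ))
       else 0) := by
    intro i
    unfold dEnt
    split_ifs <;> first | ring1 | omega
  rw [Finset.sum_congr rfl (fun i _ => key i)]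
  rw [Fin.sum_univ_eq_sum_range
    (fun i => (if i < (l:ℕ) then _ else if i = (l:ℕ) then -((l : ℕ) : ℂ) * _ else 0))]
  exact sum_key_aux d l l.isLt _

lemma diagdiag_aux (d : ℕ) (l l' : Fin d) (h : l ≠ l') :
    ∑ i : Fin d, dEnt d l i * dEnt d l' i = 0 := by
  rcases lt_or_gt_of_ne (fun hv => h (Fin.ext hv) : (l:ℕ) ≠ (l':ℕ)) with hlt | hgt
  · exact diagdiag_lt_aux d l l' hlt
  · rw [← diagdiag_lt_aux d l' l hgt]
    exact Finset.sum_congr rfl fun i _ => mul_comm _ _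

/-- Off-diagonal entries of the GHZ correlation matrix vanish: for distinct
Gell-Mann generators `Λ_n ≠ Λ_m`, `tr[ρ_ghz (Λ_n ⊗ Λ_m)] = 0`. -/
theorem stmt_9 (d : ℕ) (hd : 2 ≤ d) (n m : GMIdx d) (hnm : n ≠ m) :
    (ghz d * (gellMann n ⊗ₖ gellMann m)).trace = 0 := by
  rw [trace_ghz_kron_aux]
  rw [show (∑ j : Fin d, ∑ k : Fin d, gellMann n k j * gellMann m k j) = 0 from ?_, mul_zero]
  rcases n with ⟨⟨a, b⟩, hab⟩ | ⟨⟨a, b⟩, hab⟩ | ⟨l, hl⟩ <;>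
    rcases m with ⟨⟨c, e⟩, hce⟩ | ⟨⟨c, e⟩, hce⟩ | ⟨l', hl'⟩
  -- sym / sym
  · have h : (a, b) ≠ (c, e) := fun hp => hnm (by cases hp; rfl)
    simp only [gellMann, Matrix.add_apply, Matrix.single, Matrix.of_apply, ite_and]
    simp only [add_mul, mul_add, ite_mul, mul_ite, one_mul, mul_one, zero_mul, mul_zero,
      Finset.sum_add_distrib, Finset.sum_ite_eq, Finset.sum_ite_eq', Finset.mem_univ, if_true]
    split_ifs <;>
      first
        | ring1
        | (exfalso; subst_vars;
            first
              | exact h rfl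
              | exact absurd (hab.trans hce) (by simp)
              | exact absurd (hce.trans hab) (by simp)
              | exact absurd hab (by simp)
              | exact absurd hce (by simp))
  -- sym / antisym
  · simp only [gellMann, Matrix.add_apply, Matrix.smul_apply, smul_eq_mul,
      Matrix.single, Matrix.of_apply, ite_and]
    simp only [add_mul, mul_add, ite_mul, mul_ite, one_mul, mul_one, zero_mul, mul_zero,
      Finset.sum_add_distrib, Finset.sum_ite_eq, Finset.sum_ite_eq', Finset.mem_univ, if_true]
    split_ifs <;>
      first
        | ring1
        | (exfalso; subst_vars;
            first
              | exact absurd (hab.trans hce) (by simp)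
              | exact absurd (hce.trans hab) (by simp)
              | exact absurd hab (by simp)
              | exact absurd hce (by simp))
  -- sym / diag
  · simp only [gellMann, Matrix.add_apply, Matrix.diagonal_apply,
      Matrix.single, Matrix.of_apply, ite_and]
    simp only [add_mul, mul_add, ite_mul, mul_ite, one_mul, mul_one, zero_mul, mul_zero,
      Finset.sum_add_distrib, Finset.sum_ite_eq, Finset.sum_ite_eq', Finset.mem_univ, if_true]
    refine Finset.sum_eq_zero fun x _ => ?_
    split_ifs <;>
      first
        | ring1
        | (exfalso; subst_vars;
            first
              | exact absurd hab (by simp)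
              | omega)
  -- antisym / sym
  · simp only [gellMann, Matrix.add_apply, Matrix.smul_apply, smul_eq_mul,
      Matrix.single, Matrix.of_apply, ite_and]
    simp only [add_mul, mul_add, ite_mul, mul_ite, one_mul, mul_one, zero_mul, mul_zero,
      Finset.sum_add_distrib, Finset.sum_ite_eq, Finset.sum_ite_eq', Finset.mem_univ, if_true]
    split_ifs <;>
      first
        | ring1
        | (exfalso; subst_vars;
            first
              | exact absurd (hab.trans hce) (by simp)
              | exact absurd (hce.trans hab) (by simp)
              | exact absurd hab (by simp)
              | exact absurd hce (by simp))
  -- antisym / antisym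
  · have h : (a, b) ≠ (c, e) := fun hp => hnm (by cases hp; rfl)
    simp only [gellMann, Matrix.add_apply, Matrix.smul_apply, smul_eq_mul,
      Matrix.single, Matrix.of_apply, ite_and]
    simp only [add_mul, mul_add, ite_mul, mul_ite, one_mul, mul_one, zero_mul, mul_zero,
      Finset.sum_add_distrib, Finset.sum_ite_eq, Finset.sum_ite_eq', Finset.mem_univ, if_true]
    split_ifs <;>
      first
        | ring1
        | (exfalso; subst_vars;
            first
              | exact h rfl
              | exact absurd (hab.trans hce) (by simp)
              | exact absurd (hce.trans hab) (by simp)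
              | exact absurd hab (by simp)
              | exact absurd hce (by simp))
  -- antisym / diag
  · simp only [gellMann, Matrix.add_apply, Matrix.smul_apply, smul_eq_mul,
      Matrix.diagonal_apply, Matrix.single, Matrix.of_apply, ite_and]
    simp only [add_mul, mul_add, ite_mul, mul_ite, one_mul, mul_one, zero_mul, mul_zero,
      Finset.sum_add_distrib, Finset.sum_ite_eq, Finset.sum_ite_eq', Finset.mem_univ, if_true]
    refine Finset.sum_eq_zero fun x _ => ?_
    split_ifs <;>
      first
        | ring1
        | (exfalso; subst_vars;
            first
              | exact absurd hab (by simp)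
              | omega)
  -- diag / sym
  · simp only [gellMann, Matrix.add_apply, Matrix.diagonal_apply,
      Matrix.single, Matrix.of_apply, ite_and]
    simp only [add_mul, mul_add, ite_mul, mul_ite, one_mul, mul_one, zero_mul, mul_zero,
      Finset.sum_add_distrib, Finset.sum_ite_eq, Finset.sum_ite_eq', Finset.mem_univ, if_true]
    split_ifs <;>
      first
        | ring1
        | (exfalso; subst_vars;
            first
              | exact absurd hce (by simp)
              | omega)
  -- diag / antisym
  · simp only [gellMann, Matrix.add_apply, Matrix.smul_apply, smul_eq_mul,
      Matrix.diagonal_apply, Matrix.single, Matrix.of_apply, ite_and]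
    simp only [add_mul, mul_add, ite_mul, mul_ite, one_mul, mul_one, zero_mul, mul_zero,
      Finset.sum_add_distrib, Finset.sum_ite_eq, Finset.sum_ite_eq', Finset.mem_univ, if_true]
    split_ifs <;>
      first
        | ring1
        | (exfalso; subst_vars;
            first
              | exact absurd hce (by simp)
              | omega)
  -- diag / diag
  · have h : l ≠ l' := fun he => hnm (by cases he; rfl)
    have hE : (gellMann (Sum.inr (Sum.inr ⟨l, hl⟩)) : Matrix (Fin d) (Fin d) ℂ)
        = Matrix.diagonal (dEnt d l) := rfl
    have hE' : (gellMann (Sum.inr (Sum.inr ⟨l', hl'⟩)) : Matrix (Fin d) (Fin d) ℂ)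
        = Matrix.diagonal (dEnt d l') := rfl
    rw [hE, hE', ← diagdiag_aux d l l' h]
    refine Finset.sum_congr rfl fun j _ => ?_
    rw [Finset.sum_eq_single_of_mem j (Finset.mem_univ j)
      (fun k _ hk => by rw [Matrix.diagonal_apply_ne _ hk, zero_mul]),
      Matrix.diagonal_apply_eq, Matrix.diagonal_apply_eq]
end

section
/- The spectral norm of the correlation matrix of the two-qudit GHZ state equals 2/d: ‖T_{ρ_ghz,d}‖ = 2/d for every d ≥ 2. -/
open Matrix Kronecker

instance (d : ℕ) : Fintype (GMIdx d) := by unfold GMIdx; infer_instance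
instance (d : ℕ) : DecidableEq (GMIdx d) := by unfold GMIdx; infer_instance

/-- The correlation matrix of the GHZ state,
`T^{(nm)} = tr[ρ_ghz (Λ_n ⊗ Λ_m)]` (a real matrix). -/
noncomputable def corrT (d : ℕ) : Matrix (GMIdx d) (GMIdx d) ℝ :=
  fun n m => ((ghz d * (gellMann n ⊗ₖ gellMann m)).trace).re

/-! ### Auxiliary machinery -/

lemma trace_std_mul {d : ℕ} (j k : Fin d) (A : Matrix (Fin d) (Fin d) ℂ) :
    (Matrix.single j k (1:ℂ) * A).trace = A k j := by
  simp [Matrix.trace, Matrix.mul_apply, Matrix.single, Matrix.diag, ite_and,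
    Finset.sum_ite_eq, Finset.sum_ite_eq']

/-- The bilinear pairing `∑_{j,k} A_{kj} B_{kj}` (no conjugation). -/
noncomputable def Sc {d : ℕ} (A B : Matrix (Fin d) (Fin d) ℂ) : ℂ :=
  ∑ j : Fin d, ∑ k : Fin d, A k j * B k j

lemma trace_ghz {d : ℕ} (A B : Matrix (Fin d) (Fin d) ℂ) :
    (ghz d * (A ⊗ₖ B)).trace = (1 / (d:ℂ)) * Sc A B := by
  unfold ghz Sc
  rw [Matrix.smul_mul, Matrix.trace_smul, smul_eq_mul]
  congr 1
  rw [Finset.sum_mul, Matrix.trace_sum]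
  refine Finset.sum_congr rfl fun j _ => ?_
  rw [Finset.sum_mul, Matrix.trace_sum]
  refine Finset.sum_congr rfl fun k _ => ?_
  rw [← Matrix.mul_kronecker_mul, Matrix.trace_kronecker, trace_std_mul, trace_std_mul]

lemma Sc_comm {d : ℕ} (A B : Matrix (Fin d) (Fin d) ℂ) : Sc A B = Sc B A := by
  unfold Sc; simp [mul_comm]

lemma Sc_add_left {d : ℕ} (A A' B : Matrix (Fin d) (Fin d) ℂ) :
    Sc (A + A') B = Sc A B + Sc A' B := by
  unfold Sc; simp [add_mul, Finset.sum_add_distrib]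

lemma Sc_smul_left {d : ℕ} (c : ℂ) (A B : Matrix (Fin d) (Fin d) ℂ) :
    Sc (c • A) B = c * Sc A B := by
  unfold Sc; simp [Finset.mul_sum, mul_assoc]

lemma Sc_std_left {d : ℕ} (a b : Fin d) (B : Matrix (Fin d) (Fin d) ℂ) :
    Sc (Matrix.single a b 1) B = B a b := by
  unfold Sc
  simp [Matrix.single, ite_and, boole_mul, Finset.sum_ite_eq, Finset.sum_ite_eq']

lemma Sc_diag_diag {d : ℕ} (f g : Fin d → ℂ) :
    Sc (Matrix.diagonal f) (Matrix.diagonal g) = ∑ i : Fin d, f i * g i := by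
  unfold Sc
  simp [Matrix.diagonal_apply, ite_mul, Finset.sum_ite_eq, Finset.sum_ite_eq']

section cases
variable {d : ℕ} (a b a' b' : Fin d)

lemma Sc_sym_sym (hab : a < b) (h' : a' < b') :
    Sc (Matrix.single a b 1 + Matrix.single b a 1)
       (Matrix.single a' b' 1 + Matrix.single b' a' 1) =
    if a = a' ∧ b = b' then 2 else 0 := by
  rw [Sc_add_left, Sc_std_left, Sc_std_left]
  simp only [Matrix.add_apply, Matrix.single, Matrix.of_apply]
  by_cases h : a = a' ∧ b = b'
  · obtain ⟨h1, h2⟩ := h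
    subst h1; subst h2
    simp [hab.ne, hab.ne']
    norm_num
  · have k1 : ¬(a' = a ∧ b' = b) := fun ⟨x, y⟩ => h ⟨x.symm, y.symm⟩
    have k2 : ¬(b' = a ∧ a' = b) := fun ⟨x, y⟩ => by
      subst x; subst y; exact lt_asymm hab h'
    have k3 : ¬(a' = b ∧ b' = a) := fun ⟨x, y⟩ => by
      subst x; subst y; exact lt_asymm hab h'
    simp [k1, k2, k3, h]
    exact fun x y => h ⟨y.symm, x.symm⟩

lemma Sc_sym_asym (hab : a < b) (h' : a' < b') :
    Sc (Matrix.single a b 1 + Matrix.single b a 1)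
       ((-Complex.I) • Matrix.single a' b' 1 +
         Complex.I • Matrix.single b' a' 1) = 0 := by
  rw [Sc_add_left, Sc_std_left, Sc_std_left]
  simp only [Matrix.add_apply, Matrix.smul_apply, Matrix.single, Matrix.of_apply,
    smul_eq_mul]
  have k2 : ¬(b' = a ∧ a' = b) := fun ⟨x, y⟩ => by
    subst x; subst y; exact lt_asymm hab h'
  have k3 : ¬(a' = b ∧ b' = a) := fun ⟨x, y⟩ => by
    subst x; subst y; exact lt_asymm hab h'
  by_cases h : a' = a ∧ b' = b
  · obtain ⟨h1, h2⟩ := h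
    subst h1; subst h2
    simp [hab.ne, hab.ne']
  · have k4 : ¬(b' = b ∧ a' = a) := fun ⟨x, y⟩ => h ⟨y, x⟩
    simp [h, k2, k3, k4]

lemma Sc_asym_asym (hab : a < b) (h' : a' < b') :
    Sc ((-Complex.I) • Matrix.single a b 1 + Complex.I • Matrix.single b a 1)
       ((-Complex.I) • Matrix.single a' b' 1 +
         Complex.I • Matrix.single b' a' 1) =
    if a = a' ∧ b = b' then -2 else 0 := by
  rw [Sc_add_left, Sc_smul_left, Sc_smul_left, Sc_std_left, Sc_std_left]
  simp only [Matrix.add_apply, Matrix.smul_apply, Matrix.single, Matrix.of_apply,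
    smul_eq_mul]
  have k2 : ¬(b' = a ∧ a' = b) := fun ⟨x, y⟩ => by
    subst x; subst y; exact lt_asymm hab h'
  have k3 : ¬(a' = b ∧ b' = a) := fun ⟨x, y⟩ => by
    subst x; subst y; exact lt_asymm hab h'
  by_cases h : a = a' ∧ b = b'
  · obtain ⟨h1, h2⟩ := h
    subst h1; subst h2
    simp only [if_pos rfl, and_self, if_pos (And.intro rfl rfl), if_neg k2, if_neg k3,
      mul_one, mul_zero, add_zero, zero_add]
    ring_nf
    simp [Complex.I_sq]
  · have k1 : ¬(a' = a ∧ b' = b) := fun ⟨x, y⟩ => h ⟨x.symm, y.symm⟩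
    have k4 : ¬(b' = b ∧ a' = a) := fun ⟨x, y⟩ => h ⟨y.symm, x.symm⟩
    simp [h, k1, k2, k3, k4]

lemma Sc_sym_diag (hab : a < b) (f : Fin d → ℂ) :
    Sc (Matrix.single a b 1 + Matrix.single b a 1) (Matrix.diagonal f) = 0 := by
  rw [Sc_add_left, Sc_std_left, Sc_std_left,
    Matrix.diagonal_apply_ne _ hab.ne, Matrix.diagonal_apply_ne _ hab.ne', add_zero]

lemma Sc_asym_diag (hab : a < b) (f : Fin d → ℂ) :
    Sc ((-Complex.I) • Matrix.single a b 1 + Complex.I • Matrix.single b a 1)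
       (Matrix.diagonal f) = 0 := by
  rw [Sc_add_left, Sc_smul_left, Sc_smul_left, Sc_std_left, Sc_std_left,
    Matrix.diagonal_apply_ne _ hab.ne, Matrix.diagonal_apply_ne _ hab.ne']
  ring

end cases

/-- The diagonal entries of the diagonal Gell-Mann generator. -/
noncomputable def fl {d : ℕ} (l : Fin d) : Fin d → ℂ := fun i : Fin d =>
  if (i : ℕ) < (l : ℕ) then (Real.sqrt (2 / ((l : ℕ) * ((l : ℕ) + 1))) : ℂ)
  else if (i : ℕ) = (l : ℕ) then
    -((l : ℕ) : ℂ) * (Real.sqrt (2 / ((l : ℕ) * ((l : ℕ) + 1))) : ℂ)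
  else 0

lemma sum_fl_le {d : ℕ} (l l' : Fin d) (hl : 1 ≤ (l:ℕ)) (hle : (l:ℕ) ≤ (l':ℕ)) :
    ∑ i : Fin d, fl l i * fl l' i = if l = l' then 2 else 0 := by
  set L := (l:ℕ) with hL
  set L' := (l':ℕ) with hL'
  set c : ℂ := (Real.sqrt (2 / (L * (L + 1))) : ℂ) with hc
  set c' : ℂ := (Real.sqrt (2 / (L' * (L' + 1))) : ℂ) with hc'
  have key : ∀ i : Fin d, fl l i * fl l' i =
      (fun n : ℕ => (if n < L then c else if n = L then -(L:ℂ)*c else 0) *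
        (if n < L' then c' else if n = L' then -(L':ℂ)*c' else 0)) (i : ℕ) := by
    intro i; rfl
  rw [Finset.sum_congr rfl (fun i _ => key i),
    Fin.sum_univ_eq_sum_range (fun n : ℕ => (if n < L then c else if n = L then -(L:ℂ)*c else 0) *
      (if n < L' then c' else if n = L' then -(L':ℂ)*c' else 0)) d]
  have hLd : L + 1 ≤ d := l.isLt
  rw [← Finset.sum_subset (Finset.range_subset_range.2 hLd) (fun x hx1 hx => by
    have h1 : ¬ x < L := by simp only [Finset.mem_range] at hx; omega
    have h2 : ¬ x = L := by simp only [Finset.mem_range] at hx; omega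
    simp [h1, h2])]
  rw [Finset.sum_range_succ]
  have hin : ∀ x ∈ Finset.range L,
      (if x < L then c else if x = L then -(L:ℂ)*c else 0) *
        (if x < L' then c' else if x = L' then -(L':ℂ)*c' else 0) = c * c' := by
    intro x hx
    have h1 : x < L := Finset.mem_range.1 hx
    have h2 : x < L' := by omega
    simp [h1, h2]
  rw [Finset.sum_congr rfl hin, Finset.sum_const, Finset.card_range]
  have hcc : c * c = 2 / ((L:ℂ) * (L + 1)) := by
    rw [hc, ← Complex.ofReal_mul, Real.mul_self_sqrt (by positivity)]
    push_cast; ring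
  rcases eq_or_lt_of_le hle with heq | hlt
  · have hll' : l = l' := Fin.ext heq
    have hcc' : c' = c := by rw [hc', hc, ← heq]
    rw [if_pos hll', if_neg (lt_irrefl L), if_pos rfl, if_neg (by omega : ¬ L < L'),
      if_pos heq, hcc', nsmul_eq_mul]
    have hLL : ((L':ℕ):ℂ) = ((L:ℕ):ℂ) := by rw [← heq]
    have hne : ((L:ℕ):ℂ) * (((L:ℕ):ℂ) + 1) ≠ 0 := by
      have h1 : ((L:ℕ):ℂ) ≠ 0 := Nat.cast_ne_zero.2 (by omega)
      have h2 : ((L:ℕ):ℂ) + 1 ≠ 0 := by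
        have : (((L+1:ℕ)):ℂ) ≠ 0 := Nat.cast_ne_zero.2 (by omega)
        push_cast at this; exact this
      exact mul_ne_zero h1 h2
    calc ((L:ℕ):ℂ) * (c * c) + -((L:ℕ):ℂ) * c * (-((L':ℕ):ℂ) * c)
        = (((L:ℕ):ℂ) * (((L:ℕ):ℂ) + 1)) * (c*c) := by rw [hLL]; ring
      _ = 2 := by rw [hcc]; field_simp; exact div_self (Nat.cast_ne_zero.2 (by omega))
  · have hll' : ¬ l = l' := fun h => by
      have : L = L' := congrArg Fin.val h
      omega
    rw [if_neg hll', if_neg (lt_irrefl L), if_pos rfl, if_pos hlt]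
    ring

lemma sum_fl {d : ℕ} (l l' : Fin d) (hl : 1 ≤ (l:ℕ)) (hl' : 1 ≤ (l':ℕ)) :
    ∑ i : Fin d, fl l i * fl l' i = if l = l' then 2 else 0 := by
  rcases le_total (l:ℕ) (l':ℕ) with h | h
  · exact sum_fl_le l l' hl h
  · rw [show (∑ i : Fin d, fl l i * fl l' i) = ∑ i : Fin d, fl l' i * fl l i by
      simp [mul_comm]]
    rw [sum_fl_le l' l hl' h]
    simp [eq_comm]

lemma gellMann_inl {d : ℕ} (a b : Fin d) (hab : ((a, b) : Fin d × Fin d).1 < (a, b).2) :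
    gellMann (d := d) (Sum.inl ⟨(a, b), hab⟩) =
      Matrix.single a b 1 + Matrix.single b a 1 := rfl

lemma gellMann_inrl {d : ℕ} (a b : Fin d) (hab : ((a, b) : Fin d × Fin d).1 < (a, b).2) :
    gellMann (d := d) (Sum.inr (Sum.inl ⟨(a, b), hab⟩)) =
      (-Complex.I) • Matrix.single a b 1 + Complex.I • Matrix.single b a 1 := rfl

lemma gellMann_inrr {d : ℕ} (l : Fin d) (hl : 1 ≤ (l : ℕ)) :
    gellMann (d := d) (Sum.inr (Sum.inr ⟨l, hl⟩)) = Matrix.diagonal (fl l) := rfl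

/-- Sign of each generator under transposition. -/
def eps {d : ℕ} : GMIdx d → ℝ
  | Sum.inl _ => 1
  | Sum.inr (Sum.inl _) => -1
  | Sum.inr (Sum.inr _) => 1

lemma Sc_gellMann {d : ℕ} (n m : GMIdx d) :
    Sc (gellMann n) (gellMann m) = if n = m then 2 * ((eps n : ℝ) : ℂ) else 0 := by
  rcases n with ⟨⟨a, b⟩, hab⟩ | ⟨⟨a, b⟩, hab⟩ | ⟨l, hl⟩ <;>
    rcases m with ⟨⟨a', b'⟩, h'⟩ | ⟨⟨a', b'⟩, h'⟩ | ⟨l', hl'⟩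
  · rw [gellMann_inl a b hab, gellMann_inl a' b' h', Sc_sym_sym a b a' b' hab h']
    by_cases h : a = a' ∧ b = b'
    · obtain ⟨h1, h2⟩ := h; subst h1; subst h2
      simp [eps]; rfl
    · rw [if_neg h, if_neg (fun heq => h (by cases heq; exact ⟨rfl, rfl⟩))]
  · rw [gellMann_inl a b hab, gellMann_inrl a' b' h', Sc_sym_asym a b a' b' hab h',
      if_neg (fun heq => by cases heq)]
  · rw [gellMann_inl a b hab, gellMann_inrr l' hl', Sc_sym_diag a b hab, if_neg (fun heq => by cases heq)]
  · rw [Sc_comm, gellMann_inl a' b' h', gellMann_inrl a b hab, Sc_sym_asym a' b' a b h' hab,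
      if_neg (fun heq => by cases heq)]
  · rw [gellMann_inrl a b hab, gellMann_inrl a' b' h', Sc_asym_asym a b a' b' hab h']
    by_cases h : a = a' ∧ b = b'
    · obtain ⟨h1, h2⟩ := h; subst h1; subst h2
      simp [eps]; rfl
    · rw [if_neg h, if_neg (fun heq => h (by cases heq; exact ⟨rfl, rfl⟩))]
  · rw [gellMann_inrl a b hab, gellMann_inrr l' hl', Sc_asym_diag a b hab,
      if_neg (fun heq => by cases heq)]
  · rw [Sc_comm, gellMann_inl a' b' h', gellMann_inrr l hl, Sc_sym_diag a' b' h',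
      if_neg (fun heq => by cases heq)]
  · rw [Sc_comm, gellMann_inrl a' b' h', gellMann_inrr l hl, Sc_asym_diag a' b' h',
      if_neg (fun heq => by cases heq)]
  · rw [gellMann_inrr l hl, gellMann_inrr l' hl', Sc_diag_diag, sum_fl l l' hl hl']
    by_cases h : l = l'
    · subst h; simp [eps]; rfl
    · rw [if_neg h, if_neg (fun heq => h (by cases heq; rfl))]

lemma corrT_eq {d : ℕ} :
    corrT d = ((2 : ℝ) / d) • Matrix.diagonal (eps (d := d)) := by
  funext n m
  rw [Matrix.smul_apply, Matrix.diagonal_apply, smul_eq_mul]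
  show ((ghz d * (gellMann n ⊗ₖ gellMann m)).trace).re = _
  rw [trace_ghz, Sc_gellMann]
  by_cases h : n = m
  · rw [if_pos h, if_pos h]
    have : (1 / (d:ℂ)) * (2 * ((eps n : ℝ) : ℂ)) = (((2 / d * eps n : ℝ)) : ℂ) := by
      push_cast; ring
    rw [this, Complex.ofReal_re]
  · rw [if_neg h, if_neg h, mul_zero, Complex.zero_re, mul_zero]

lemma eps_sq {d : ℕ} (n : GMIdx d) : eps n * eps n = 1 := by
  rcases n with _ | _ | _ <;> simp [eps]

set_option maxHeartbeats 1000000 in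
set_option synthInstance.maxHeartbeats 400000 in
/-- The spectral (operator) norm of the GHZ correlation matrix equals `2/d`. -/
theorem stmt_10 (d : ℕ) (hd : 2 ≤ d) :
    ‖Matrix.toEuclideanCLM (𝕜 := ℝ) (corrT d)‖ = 2 / (d : ℝ) := by
  have hne : Nonempty (GMIdx d) :=
    ⟨Sum.inl ⟨(⟨0, by omega⟩, ⟨1, by omega⟩), by simp [Fin.lt_def]⟩⟩
  haveI := hne
  haveI : Nontrivial (EuclideanSpace ℝ (GMIdx d)) := inferInstance
  set a := Matrix.toEuclideanCLM (𝕜 := ℝ) (corrT d) with ha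
  have hmul : corrT d * corrT d = ((4 : ℝ) / (d^2 : ℝ)) • (1 : Matrix (GMIdx d) (GMIdx d) ℝ) := by
    rw [corrT_eq, Matrix.smul_mul, Matrix.mul_smul, smul_smul, Matrix.diagonal_mul_diagonal]
    rw [show (fun i => eps (d := d) i * eps i) = fun _ => (1:ℝ) from funext eps_sq]
    rw [Matrix.diagonal_one]
    congr 1
    have hd0 : (d : ℝ) ≠ 0 := by positivity
    field_simp
    ring
  have hstar : star (corrT d) = corrT d := by
    ext n m
    rw [Matrix.star_apply, star_trivial, corrT_eq]
    rcases eq_or_ne n m with h | h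
    · rw [h]
    · rw [Matrix.smul_apply, Matrix.smul_apply, Matrix.diagonal_apply_ne _ h,
        Matrix.diagonal_apply_ne _ h.symm]
  have key : star a * a = ((4 : ℝ) / (d^2 : ℝ)) • (1 : EuclideanSpace ℝ (GMIdx d) →L[ℝ] _) := by
    rw [ha, ← map_star, ← _root_.map_mul, hstar, hmul, _root_.map_smul, _root_.map_one]
  have hnn : ‖a‖ * ‖a‖ = 4 / (d^2 : ℝ) := by
    rw [← CStarRing.norm_star_mul_self, key,
      norm_smul (α := ℝ) (β := EuclideanSpace ℝ (GMIdx d) →L[ℝ] EuclideanSpace ℝ (GMIdx d))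
        ((4:ℝ) / (d^2:ℝ)) 1,
      norm_one, mul_one, Real.norm_eq_abs, abs_of_nonneg (by positivity)]
  have hd0 : (0:ℝ) < d := by positivity
  have h2 : (2 / (d:ℝ)) * (2 / (d:ℝ)) = 4 / (d^2:ℝ) := by field_simp; ring
  nlinarith [norm_nonneg a, div_pos (by norm_num : (0:ℝ) < 2) hd0]
end

section
/- Let d ≥ 2 be even and X' = Σ_{m odd, m≤d−1} (−1)^{γ_m} (|m+1⟩⟨m| + |m⟩⟨m+1|). Then X' is Hermitian, traceless, (X')² = I, and tr[ρ_ghz (X' ⊗ X')] = 1. -/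
open Matrix Kronecker

lemma std_transpose {n : ℕ} (i j : Fin n) (c : ℂ) :
    (Matrix.single i j c)ᵀ = Matrix.single j i c := by
  ext a b
  simp [Matrix.single, and_comm]

lemma std_conjTranspose {n : ℕ} (i j : Fin n) (c : ℂ) :
    (Matrix.single i j c)ᴴ = Matrix.single j i (star c) := by
  ext a b
  simp [Matrix.conjTranspose_apply, Matrix.single, apply_ite (starRingEnd ℂ), and_comm]

lemma pairmul {n : ℕ} (a b : Fin n) (hab : a ≠ b) :
    (Matrix.single a b (1:ℂ) + Matrix.single b a 1) *
      (Matrix.single a b 1 + Matrix.single b a 1) =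
      Matrix.single a a 1 + Matrix.single b b 1 := by
  rw [add_mul, mul_add, mul_add,
    Matrix.single_mul_single_of_ne 1 a b _ hab.symm 1,
    Matrix.single_mul_single_of_ne 1 b a _ hab 1,
    Matrix.single_mul_single_same, Matrix.single_mul_single_same]
  rw [mul_one]
  abel

lemma pairmul0 {n : ℕ} (a b c d : Fin n) (h1 : b ≠ c) (h2 : b ≠ d) (h3 : a ≠ c) (h4 : a ≠ d) :
    (Matrix.single a b (1:ℂ) + Matrix.single b a 1) *
      (Matrix.single c d 1 + Matrix.single d c 1) = 0 := by
  rw [add_mul, mul_add, mul_add,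
    Matrix.single_mul_single_of_ne 1 a b _ h1 1,
    Matrix.single_mul_single_of_ne 1 a b _ h2 1,
    Matrix.single_mul_single_of_ne 1 b a _ h3 1,
    Matrix.single_mul_single_of_ne 1 b a _ h4 1]
  simp
lemma tr_std_mul {n : ℕ} (j k : Fin n) (M : Matrix (Fin n) (Fin n) ℂ) :
    (Matrix.single j k (1 : ℂ) * M).trace = M k j := by
  simp only [Matrix.trace, Matrix.diag, Matrix.mul_apply, Matrix.single,
    Matrix.of_apply, ite_mul, one_mul, zero_mul, ite_and]
  rw [Finset.sum_comm]
  simp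

/-- For even `d = 2e ≥ 2` and
`X' = Σ_{m odd} (−1)^{γ_m} (|m+1⟩⟨m| + |m⟩⟨m+1|)` (0-indexed: the sum pairs the
basis vectors `2m` and `2m+1`), `X'` is Hermitian, traceless, `X'² = 1`, and
`tr[ρ_ghz (X' ⊗ X')] = 1`. -/
theorem stmt_12 (e : ℕ) (he : 1 ≤ e)
    (γ : Fin e → ℕ) (hγpos : ∀ m, 1 ≤ γ m)
    (X : Matrix (Fin (2 * e)) (Fin (2 * e)) ℂ)
    (hX : X = ∑ m : Fin e, ((-1 : ℂ) ^ γ m) •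
        (Matrix.single (⟨2 * (m : ℕ) + 1, by omega⟩ : Fin (2 * e))
            (⟨2 * (m : ℕ), by omega⟩ : Fin (2 * e)) (1 : ℂ) +
          Matrix.single (⟨2 * (m : ℕ), by omega⟩ : Fin (2 * e))
            (⟨2 * (m : ℕ) + 1, by omega⟩ : Fin (2 * e)) (1 : ℂ))) :
    X.IsHermitian ∧ X.trace = 0 ∧ X * X = 1 ∧
      (ghz (2 * e) * (X ⊗ₖ X)).trace = 1 := by
  have hstar : ∀ m : Fin e, star ((-1 : ℂ) ^ γ m) = (-1 : ℂ) ^ γ m := by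
    intro m; simp
  have hherm : X.IsHermitian := by
    rw [hX]
    unfold Matrix.IsHermitian
    rw [Matrix.conjTranspose_sum]
    refine Finset.sum_congr rfl fun m _ => ?_
    rw [Matrix.conjTranspose_smul, Matrix.conjTranspose_add, std_conjTranspose,
      std_conjTranspose, hstar, star_one]
    rw [add_comm]
  have htr : X.trace = 0 := by
    rw [hX, Matrix.trace_sum]
    refine Finset.sum_eq_zero fun m _ => ?_
    rw [Matrix.trace_smul, Matrix.trace_add]
    rw [Matrix.trace_single_eq_of_ne, Matrix.trace_single_eq_of_ne]
    · simp
    · intro h; simpa using congrArg Fin.val h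
    · intro h; simpa using congrArg Fin.val h
  have hsq : X * X = 1 := by
    rw [hX, Finset.sum_mul_sum]
    have key : ∀ m n : Fin e,
        (((-1 : ℂ) ^ γ m) •
          (Matrix.single (⟨2 * (m : ℕ) + 1, by omega⟩ : Fin (2 * e))
              (⟨2 * (m : ℕ), by omega⟩ : Fin (2 * e)) (1 : ℂ) +
            Matrix.single (⟨2 * (m : ℕ), by omega⟩ : Fin (2 * e))
              (⟨2 * (m : ℕ) + 1, by omega⟩ : Fin (2 * e)) (1 : ℂ))) *
        (((-1 : ℂ) ^ γ n) •
          (Matrix.single (⟨2 * (n : ℕ) + 1, by omega⟩ : Fin (2 * e))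
              (⟨2 * (n : ℕ), by omega⟩ : Fin (2 * e)) (1 : ℂ) +
            Matrix.single (⟨2 * (n : ℕ), by omega⟩ : Fin (2 * e))
              (⟨2 * (n : ℕ) + 1, by omega⟩ : Fin (2 * e)) (1 : ℂ))) =
        if m = n then
          (Matrix.single (⟨2 * (m : ℕ) + 1, by omega⟩ : Fin (2 * e))
              (⟨2 * (m : ℕ) + 1, by omega⟩ : Fin (2 * e)) (1 : ℂ) +
            Matrix.single (⟨2 * (m : ℕ), by omega⟩ : Fin (2 * e))
              (⟨2 * (m : ℕ), by omega⟩ : Fin (2 * e)) (1 : ℂ)) else 0 := by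
      intro m n
      rw [Matrix.smul_mul, Matrix.mul_smul, smul_smul, ← pow_add]
      by_cases hmn : m = n
      · subst hmn
        rw [pairmul _ _ (Fin.ne_of_val_ne (show 2*(m:ℕ)+1 ≠ 2*(m:ℕ) by omega))]
        rw [if_pos rfl]
        have : ((-1 : ℂ)) ^ (γ m + γ m) = 1 := by
          rw [← two_mul, pow_mul]; norm_num
        rw [this, one_smul]
      · rw [if_neg hmn]
        have hne : (m : ℕ) ≠ (n : ℕ) := fun h => hmn (Fin.ext h)
        rw [pairmul0 _ _ _ _
          (Fin.ne_of_val_ne (show 2*(m:ℕ) ≠ 2*(n:ℕ)+1 by omega))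
          (Fin.ne_of_val_ne (show 2*(m:ℕ) ≠ 2*(n:ℕ) by omega))
          (Fin.ne_of_val_ne (show 2*(m:ℕ)+1 ≠ 2*(n:ℕ)+1 by omega))
          (Fin.ne_of_val_ne (show 2*(m:ℕ)+1 ≠ 2*(n:ℕ) by omega))]
        simp
    rw [Finset.sum_congr rfl fun m _ => Finset.sum_congr rfl fun n _ => key m n]
    have step : ∀ m : Fin e, (∑ n : Fin e, if m = n then
          (Matrix.single (⟨2 * (m : ℕ) + 1, by omega⟩ : Fin (2 * e))
              (⟨2 * (m : ℕ) + 1, by omega⟩ : Fin (2 * e)) (1 : ℂ) +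
            Matrix.single (⟨2 * (m : ℕ), by omega⟩ : Fin (2 * e))
              (⟨2 * (m : ℕ), by omega⟩ : Fin (2 * e)) (1 : ℂ)) else 0) =
          (Matrix.single (⟨2 * (m : ℕ) + 1, by omega⟩ : Fin (2 * e))
              (⟨2 * (m : ℕ) + 1, by omega⟩ : Fin (2 * e)) (1 : ℂ) +
            Matrix.single (⟨2 * (m : ℕ), by omega⟩ : Fin (2 * e))
              (⟨2 * (m : ℕ), by omega⟩ : Fin (2 * e)) (1 : ℂ)) := by
      intro m; simp
    rw [Finset.sum_congr rfl fun m _ => step m]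
    ext i j
    simp only [Matrix.sum_apply, Matrix.add_apply, Matrix.one_apply,
      Matrix.single, Matrix.of_apply, Fin.ext_iff, Fin.val_mk, and_self]
    by_cases hij : (i : ℕ) = (j : ℕ)
    · rw [if_pos hij]
      rw [Finset.sum_eq_single (⟨(i : ℕ) / 2, by omega⟩ : Fin e)]
      · simp only [Fin.val_mk]
        split_ifs <;> first | (exfalso; omega) | norm_num
      · intro b _ hb
        have hbv : (b : ℕ) ≠ (i : ℕ) / 2 := fun h => hb (Fin.ext h)
        split_ifs <;> first | (exfalso; omega) | norm_num
      · intro h; exact absurd (Finset.mem_univ _) h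
    · rw [if_neg hij]
      refine Finset.sum_eq_zero fun m _ => ?_
      split_ifs <;> first | (exfalso; omega) | norm_num
  have hsymm : Xᵀ = X := by
    rw [hX, Matrix.transpose_sum]
    refine Finset.sum_congr rfl fun m _ => ?_
    rw [Matrix.transpose_smul, Matrix.transpose_add, std_transpose, std_transpose]
    rw [add_comm]
  have htrghz : (ghz (2 * e) * (X ⊗ₖ X)).trace = 1 := by
    unfold ghz
    rw [Matrix.smul_mul, Matrix.trace_smul]
    rw [Finset.sum_mul, Matrix.trace_sum]
    have : ∀ j : Fin (2 * e),
        ((∑ k : Fin (2 * e),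
          (Matrix.single j k (1 : ℂ)) ⊗ₖ (Matrix.single j k (1 : ℂ))) *
          (X ⊗ₖ X)).trace = ∑ k : Fin (2 * e), X k j * X k j := by
      intro j
      rw [Finset.sum_mul, Matrix.trace_sum]
      refine Finset.sum_congr rfl fun k _ => ?_
      rw [← Matrix.mul_kronecker_mul, Matrix.trace_kronecker, tr_std_mul]
    rw [Finset.sum_congr rfl fun j _ => this j]
    have hXX : ∑ j : Fin (2 * e), ∑ k : Fin (2 * e), X k j * X k j = (2 * e : ℂ) := by
      have : ∀ j k : Fin (2 * e), X k j * X k j = X k j * X j k := by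
        intro j k
        congr 1
        nth_rewrite 1 [← hsymm]
        rfl
      rw [Finset.sum_congr rfl fun j _ => Finset.sum_congr rfl fun k _ => this j k]
      rw [Finset.sum_comm]
      have : ∑ k : Fin (2 * e), ∑ j : Fin (2 * e), X k j * X j k = (X * X).trace := by
        simp [Matrix.trace, Matrix.diag, Matrix.mul_apply]
      rw [this, hsq, Matrix.trace_one]
      simp
    rw [hXX]
    have h2e : ((2 * e : ℕ) : ℂ) ≠ 0 := Nat.cast_ne_zero.mpr (by omega)
    push_cast at h2e ⊢
    rw [smul_eq_mul]
    field_simp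
    exact div_self (by exact_mod_cast (show e ≠ 0 by omega))
  exact ⟨hherm, htr, hsq, htrghz⟩
end

section
/- Let ρ be a density operator on ℂ^d ⊗ ℂ^d and B a Hermitian operator on ℂ^d with all eigenvalues in [−1,1]. If tr[ρ(B ⊗ B)] = 1, then for any eigenvalues λ_i, λ_k of B with λ_i λ_k ≠ 1, the joint probability tr[ρ(E_B(λ_i) ⊗ E_B(λ_k))] = 0, where E_B(λ) denotes the spectral projection of B onto the λ-eigenspace. -/
open Matrix Kronecker
open scoped ComplexOrder

lemma my_trace_nn {m : Type*} [Fintype m] [DecidableEq m] {M : Matrix m m ℂ}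
    (hM : M.PosSemidef) : 0 ≤ M.trace := by
  apply Finset.sum_nonneg
  intro i _
  have := hM.dotProduct_mulVec_nonneg (Pi.single i 1)
  simpa [dotProduct, Pi.single_apply, apply_ite] using this

open scoped MatrixOrder in
lemma my_trace_mul_nn {m : Type*} [Fintype m] [DecidableEq m] {A P : Matrix m m ℂ}
    (hA : A.PosSemidef) (hP : P.PosSemidef) : 0 ≤ (A * P).trace := by
  obtain ⟨S, rfl⟩ := CStarAlgebra.nonneg_iff_eq_star_mul_self.mp hP.nonneg
  have h1 : (A * (star S * S)).trace = (S * A * Sᴴ).trace := by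
    rw [star_eq_conjTranspose, ← Matrix.mul_assoc, trace_mul_cycle]
  rw [h1]
  apply my_trace_nn
  exact hA.mul_mul_conjTranspose_same S

lemma my_kron_conjT {d : ℕ} (A B : Matrix (Fin d) (Fin d) ℂ) :
    (A ⊗ₖ B)ᴴ = Aᴴ ⊗ₖ Bᴴ := by
  ext ⟨i,k⟩ ⟨j,l⟩
  simp [conjTranspose_apply, kroneckerMap_apply, mul_comm]

/-- Let `ρ` be a density operator on `ℂ^d ⊗ ℂ^d` and `B` a Hermitian operator
on `ℂ^d` given by its spectral decomposition `B = Σ_i λ_i E_i`, with distinct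
eigenvalues `λ_i ∈ [−1,1]` and mutually orthogonal spectral projections `E_i`
summing to the identity.  If `tr[ρ (B ⊗ B)] = 1`, then for all `i, k` with
`λ_i λ_k ≠ 1` the joint probability `tr[ρ (E_i ⊗ E_k)]` vanishes. -/
theorem stmt_14 (d n : ℕ) (hd : 2 ≤ d)
    (ρ : Matrix (Fin d × Fin d) (Fin d × Fin d) ℂ)
    (hρ : ρ.PosSemidef) (hρtr : ρ.trace = 1)
    (B : Matrix (Fin d) (Fin d) ℂ)
    (lam : Fin n → ℝ) (hlam : ∀ i, lam i ∈ Set.Icc (-1 : ℝ) 1)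
    (hinj : Function.Injective lam)
    (E : Fin n → Matrix (Fin d) (Fin d) ℂ)
    (hEherm : ∀ i, (E i).IsHermitian)
    (hEproj : ∀ i, E i * E i = E i)
    (hEorth : ∀ i k, i ≠ k → E i * E k = 0)
    (hEsum : ∑ i, E i = 1)
    (hB : B = ∑ i, (lam i : ℂ) • E i)
    (hperf : (ρ * (B ⊗ₖ B)).trace = 1) :
    ∀ i k, lam i * lam k ≠ 1 → (ρ * (E i ⊗ₖ E k)).trace = 0 := by
  -- each kronecker projector is PSD
  have hPSD : ∀ i k, (E i ⊗ₖ E k).PosSemidef := by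
    intro i k
    have h : E i ⊗ₖ E k = (E i ⊗ₖ E k)ᴴ * (E i ⊗ₖ E k) := by
      rw [my_kron_conjT, (hEherm i).eq, (hEherm k).eq, ← mul_kronecker_mul,
        hEproj i, hEproj k]
    rw [h]
    exact posSemidef_conjTranspose_mul_self _
  set q : Fin n → Fin n → ℂ := fun i k => (ρ * (E i ⊗ₖ E k)).trace with hq
  have hq0 : ∀ i k, 0 ≤ q i k := fun i k => my_trace_mul_nn hρ (hPSD i k)
  -- real nonneg values
  set r : Fin n → Fin n → ℝ := fun i k => (q i k).re with hr
  have hqr : ∀ i k, q i k = (r i k : ℂ) := by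
    intro i k
    have h := hq0 i k
    rw [Complex.le_def] at h
    exact Complex.ext rfl (by simpa using h.2.symm)
  have hr0 : ∀ i k, 0 ≤ r i k := by
    intro i k
    have h := hq0 i k
    rw [Complex.le_def] at h
    simpa using h.1
  -- sum of q equals 1
  have hsum1 : ∑ i, ∑ k, q i k = 1 := by
    have hkron : (1 : Matrix (Fin d × Fin d) (Fin d × Fin d) ℂ) = ∑ i, ∑ k, E i ⊗ₖ E k := by
      rw [← one_kronecker_one (α := ℂ), ← hEsum]
      ext ⟨a,b⟩ ⟨c,e⟩
      simp [kroneckerMap_apply, Matrix.sum_apply, Finset.sum_mul_sum]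
    calc ∑ i, ∑ k, q i k = (ρ * ∑ i, ∑ k, E i ⊗ₖ E k).trace := by
          simp [hq, Finset.mul_sum, trace_sum]
      _ = 1 := by rw [← hkron, mul_one, hρtr]
  -- weighted sum equals 1
  have hsum2 : ∑ i, ∑ k, ((lam i : ℂ) * lam k) * q i k = 1 := by
    have hBB : B ⊗ₖ B = ∑ i, ∑ k, ((lam i : ℂ) * lam k) • (E i ⊗ₖ E k) := by
      rw [hB]
      ext ⟨a,b⟩ ⟨c,e⟩
      simp only [kroneckerMap_apply, Matrix.sum_apply, Matrix.smul_apply,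
        Finset.sum_mul_sum, smul_eq_mul]
      refine Finset.sum_congr rfl fun i _ => Finset.sum_congr rfl fun k _ => ?_
      ring
    calc ∑ i, ∑ k, ((lam i : ℂ) * lam k) * q i k
        = (ρ * ∑ i, ∑ k, ((lam i : ℂ) * lam k) • (E i ⊗ₖ E k)).trace := by
          simp [hq, Finset.mul_sum, trace_sum, mul_smul_comm, trace_smul, smul_eq_mul]
      _ = 1 := by rw [← hBB, hperf]
  -- pass to real sums
  have hrsum1 : ∑ i, ∑ k, r i k = 1 := by
    have : ((∑ i, ∑ k, r i k : ℝ) : ℂ) = 1 := by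
      push_cast
      rw [← hsum1]
      exact Finset.sum_congr rfl fun i _ => Finset.sum_congr rfl fun k _ => (hqr i k).symm
    exact_mod_cast this
  have hrsum2 : ∑ i, ∑ k, (lam i * lam k) * r i k = 1 := by
    have : ((∑ i, ∑ k, (lam i * lam k) * r i k : ℝ) : ℂ) = 1 := by
      push_cast
      rw [← hsum2]
      refine Finset.sum_congr rfl fun i _ => Finset.sum_congr rfl fun k _ => ?_
      rw [hqr i k]
    exact_mod_cast this
  -- coefficients ≤ 1
  have hcoef : ∀ i k, lam i * lam k ≤ 1 := by
    intro i k
    calc lam i * lam k ≤ |lam i * lam k| := le_abs_self _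
      _ = |lam i| * |lam k| := abs_mul _ _
      _ ≤ 1 * 1 := by
          apply mul_le_mul (abs_le.2 ⟨(hlam i).1, (hlam i).2⟩)
            (abs_le.2 ⟨(hlam k).1, (hlam k).2⟩) (abs_nonneg _) one_pos.le
      _ = 1 := one_mul 1
  -- the deficiency sum is zero with nonneg terms
  have hdef : ∑ x ∈ Finset.univ ×ˢ Finset.univ,
      (1 - lam x.1 * lam x.2) * r x.1 x.2 = 0 := by
    rw [Finset.sum_product]
    have : ∑ i, ∑ k, (1 - lam i * lam k) * r i k
        = (∑ i, ∑ k, r i k) - ∑ i, ∑ k, (lam i * lam k) * r i k := by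
      rw [← Finset.sum_sub_distrib]
      refine Finset.sum_congr rfl fun i _ => ?_
      rw [← Finset.sum_sub_distrib]
      refine Finset.sum_congr rfl fun k _ => ?_
      ring
    rw [this, hrsum1, hrsum2, sub_self]
  have hterm := (Finset.sum_eq_zero_iff_of_nonneg (fun x _ =>
    mul_nonneg (sub_nonneg.2 (hcoef x.1 x.2)) (hr0 x.1 x.2))).1 hdef
  intro i k hik
  have h := hterm (i, k) (Finset.mem_product.2 ⟨Finset.mem_univ _, Finset.mem_univ _⟩)
  have hne : 1 - lam i * lam k ≠ 0 := sub_ne_zero.2 (Ne.symm hik)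
  have hr00 : r i k = 0 := by
    rcases mul_eq_zero.1 h with h' | h'
    · exact absurd h' hne
    · exact h'
  have : q i k = 0 := by rw [hqr i k, hr00]; simp
  exact this
end

section
/- In a local hidden variable model, the original Bell inequality holds: if joint probability distributions P_{(a_i,b_k)} on [−1,1]² (i,k = 1,2) factorize as P_{(a_i,b_k)}(λ_a, λ_b) = ∫_Ω P_{a_i}(λ_a|ω) P_{b_k}(λ_b|ω) ν(dω) and the perfect correlation condition ⟨λ_{a_2} λ_{b_1}⟩ = 1 holds, then |⟨λ_{a_1} λ_{b_1}⟩ − ⟨λ_{a_1} λ_{b_2}⟩| + ⟨λ_{a_2} λ_{b_2}⟩ ≤ 1. -/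
/-!
Average the outcomes against the local response distributions: `A i ω = ∑ₓ λₓ Pa i x ω` and
`B k ω = ∑ᵧ λᵧ Pb k y ω` take values in `[-1, 1]`, and factorization gives
`E i k = ∫ A i · B k dν`. Since `A₂ B₁ ≤ 1` has integral `1`, it equals `1` almost everywhere,
which for numbers in `[-1, 1]` forces `A₂ = B₁ = ±1`. Pointwise,
`|A₁ B₁ - A₁ B₂| ≤ |B₁ - B₂| = 1 - B₁ B₂ = 1 - A₂ B₂`, and integrating gives the inequality.
-/

open MeasureTheory

lemma abs_sum_mul_le_one {ι : Type*} {s : Finset ι} {v p : ι → ℝ} (hv : ∀ x, |v x| ≤ 1)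
    (hp : ∀ x, 0 ≤ p x) (hp1 : ∑ x ∈ s, p x = 1) : |∑ x ∈ s, v x * p x| ≤ 1 :=
  calc |∑ x ∈ s, v x * p x| ≤ ∑ x ∈ s, |v x * p x| := Finset.abs_sum_le_sum_abs _ _
    _ ≤ ∑ x ∈ s, p x := Finset.sum_le_sum fun x _ => by
        rw [abs_mul, abs_of_nonneg (hp x)]
        exact mul_le_of_le_one_left (hp x) (hv x)
    _ = 1 := hp1

lemma abs_mul_le_one {a b : ℝ} (ha : |a| ≤ 1) (hb : |b| ≤ 1) : |a * b| ≤ 1 := by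
  simpa [abs_mul] using mul_le_one₀ ha (abs_nonneg b) hb

lemma abs_le_one_of_sum_eq_one {ι : Type*} [Fintype ι] {p : ι → ℝ} (hp : ∀ x, 0 ≤ p x)
    (hp1 : ∑ x, p x = 1) (x : ι) : |p x| ≤ 1 := by
  rw [abs_of_nonneg (hp x), ← hp1]
  exact Finset.single_le_sum (fun y _ => hp y) (Finset.mem_univ x)

lemma eq_of_mul_eq_one_of_abs_le_one {b c : ℝ} (hb : |b| ≤ 1) (hc : |c| ≤ 1) (h : c * b = 1) :
    c = b := by
  have hsq : (b - c) ^ 2 = 0 := by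
    nlinarith [sq_abs b, sq_abs c, abs_nonneg b, abs_nonneg c]
  linarith [pow_eq_zero_iff (n := 2) two_ne_zero |>.mp hsq]

lemma abs_mul_sub_mul_add_mul_le_one {a b c d : ℝ} (ha : |a| ≤ 1) (hb : |b| ≤ 1) (hc : |c| ≤ 1)
    (hd : |d| ≤ 1) (h : c * b = 1) : |a * b - a * d| + c * d ≤ 1 := by
  obtain rfl := eq_of_mul_eq_one_of_abs_le_one hb hc h
  have hcd : c * d ≤ 1 := (abs_le.mp (abs_mul_le_one hc hd)).2
  have hc1 : |c| = 1 := by nlinarith [abs_mul_abs_self c, abs_nonneg c]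
  calc |a * c - a * d| + c * d = |a| * |c - d| + c * d := by rw [← mul_sub, abs_mul]
    _ ≤ |c - d| + c * d := by gcongr; exact mul_le_of_le_one_left (abs_nonneg _) ha
    _ = |c * c - c * d| + c * d := by rw [← mul_sub, abs_mul, hc1, one_mul]
    _ = 1 := by rw [h, abs_of_nonneg (sub_nonneg.mpr hcd)]; ring

section Integral

variable {Ω : Type*} [MeasurableSpace Ω] {ν : Measure Ω}

lemma integrable_mul_of_abs_le_one [IsFiniteMeasure ν] {f g : Ω → ℝ} (hf : Measurable f)
    (hg : Measurable g) (hf1 : ∀ ω, |f ω| ≤ 1) (hg1 : ∀ ω, |g ω| ≤ 1) :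
    Integrable (fun ω => f ω * g ω) ν :=
  .of_bound (hf.mul hg).aestronglyMeasurable 1 <|
    .of_forall fun ω => abs_mul_le_one (hf1 ω) (hg1 ω)

lemma integral_sum_mul_sum {ι κ : Type*} [Fintype ι] [Fintype κ] (u : ι → ℝ) (v : κ → ℝ)
    (f : ι → Ω → ℝ) (g : κ → Ω → ℝ) (hfg : ∀ x y, Integrable (fun ω => f x ω * g y ω) ν) :
    ∫ ω, (∑ x, u x * f x ω) * (∑ y, v y * g y ω) ∂ν
      = ∑ x, ∑ y, u x * v y * ∫ ω, f x ω * g y ω ∂ν := by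
  have hint : ∀ x y, Integrable (fun ω => u x * f x ω * (v y * g y ω)) ν := fun x y =>
    (hfg x y).const_mul (u x * v y) |>.congr (.of_forall fun ω => by ring)
  simp_rw [Finset.sum_mul_sum]
  rw [integral_finsetSum _ fun x _ => integrable_finsetSum _ fun y _ => hint x y]
  refine Finset.sum_congr rfl fun x _ => ?_
  rw [integral_finsetSum _ fun y _ => hint x y]
  refine Finset.sum_congr rfl fun y _ => ?_
  rw [← integral_const_mul]
  exact integral_congr_ae (.of_forall fun ω => by ring)

variable [IsProbabilityMeasure ν]

lemma ae_eq_one_of_integral_eq_one {f : Ω → ℝ} (hf : Integrable f ν) (hle : ∀ᵐ ω ∂ν, f ω ≤ 1)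
    (h : ∫ ω, f ω ∂ν = 1) : ∀ᵐ ω ∂ν, f ω = 1 :=
  (integral_eq_iff_of_ae_le hf (integrable_const 1) hle).mp (by simpa using h)

lemma abs_integral_sub_add_integral_le_one {f g h : Ω → ℝ} (hf : Integrable f ν)
    (hg : Integrable g ν) (hh : Integrable h ν) (hle : ∀ᵐ ω ∂ν, |f ω - g ω| + h ω ≤ 1) :
    |∫ ω, f ω ∂ν - ∫ ω, g ω ∂ν| + ∫ ω, h ω ∂ν ≤ 1 :=
  calc |∫ ω, f ω ∂ν - ∫ ω, g ω ∂ν| + ∫ ω, h ω ∂ν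
      = |∫ ω, (f ω - g ω) ∂ν| + ∫ ω, h ω ∂ν := by rw [integral_sub hf hg]
    _ ≤ ∫ ω, |f ω - g ω| ∂ν + ∫ ω, h ω ∂ν := by
        gcongr; exact abs_integral_le_integral_abs
    _ = ∫ ω, (|f ω - g ω| + h ω) ∂ν := (integral_add (hf.sub hg).abs hh).symm
    _ ≤ ∫ _ω, (1 : ℝ) ∂ν := integral_mono_ae ((hf.sub hg).abs.add hh) (integrable_const 1) hle
    _ = 1 := by simp

end Integral

/-- The original Bell inequality in a local hidden variable model.  Outcomes
take finitely many values `val x ∈ [−1,1]`; the joint distributions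
`P i k x y = ∫ Pa i x ω · Pb k y ω dν(ω)` factorize via local response
distributions `Pa`, `Pb` (indices `0,1` correspond to `a₁,a₂` and `b₁,b₂`).
If the perfect correlation condition `⟨λ_{a₂} λ_{b₁}⟩ = 1` holds, then
`|⟨λ_{a₁} λ_{b₁}⟩ − ⟨λ_{a₁} λ_{b₂}⟩| + ⟨λ_{a₂} λ_{b₂}⟩ ≤ 1`. -/
theorem stmt_16 {Ω : Type*} [MeasurableSpace Ω] (ν : Measure Ω)
    [IsProbabilityMeasure ν]
    {ι : Type*} [Fintype ι] (val : ι → ℝ)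
    (hval : ∀ x, val x ∈ Set.Icc (-1 : ℝ) 1)
    (Pa Pb : Fin 2 → ι → Ω → ℝ)
    (hPam : ∀ i x, Measurable (Pa i x)) (hPbm : ∀ k y, Measurable (Pb k y))
    (hPa0 : ∀ i x ω, 0 ≤ Pa i x ω) (hPb0 : ∀ k y ω, 0 ≤ Pb k y ω)
    (hPa1 : ∀ i ω, ∑ x, Pa i x ω = 1) (hPb1 : ∀ k ω, ∑ y, Pb k y ω = 1)
    (P : Fin 2 → Fin 2 → ι → ι → ℝ)
    (hP : ∀ i k x y, P i k x y = ∫ ω, Pa i x ω * Pb k y ω ∂ν)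
    (E : Fin 2 → Fin 2 → ℝ)
    (hE : ∀ i k, E i k = ∑ x, ∑ y, val x * val y * P i k x y)
    (hperf : E 1 0 = 1) :
    |E 0 0 - E 0 1| + E 1 1 ≤ 1 := by
  have hval1 : ∀ x, |val x| ≤ 1 := fun x => abs_le.mpr (hval x)
  set A : Fin 2 → Ω → ℝ := fun i ω => ∑ x, val x * Pa i x ω
  set B : Fin 2 → Ω → ℝ := fun k ω => ∑ y, val y * Pb k y ω
  have hA : ∀ i ω, |A i ω| ≤ 1 := fun i ω => abs_sum_mul_le_one hval1 (hPa0 i · ω) (hPa1 i ω)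
  have hB : ∀ k ω, |B k ω| ≤ 1 := fun k ω => abs_sum_mul_le_one hval1 (hPb0 k · ω) (hPb1 k ω)
  have hAB : ∀ i k, Integrable (fun ω => A i ω * B k ω) ν := fun i k =>
    integrable_mul_of_abs_le_one (by fun_prop) (by fun_prop) (hA i) (hB k)
  have hE_int : ∀ i k, E i k = ∫ ω, A i ω * B k ω ∂ν := fun i k => by
    rw [hE]
    simp_rw [hP]
    exact (integral_sum_mul_sum _ _ _ _ fun x y => integrable_mul_of_abs_le_one (hPam i x)
      (hPbm k y) (fun ω => abs_le_one_of_sum_eq_one (hPa0 i · ω) (hPa1 i ω) x)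
      (fun ω => abs_le_one_of_sum_eq_one (hPb0 k · ω) (hPb1 k ω) y)).symm
  have hcorr : ∀ᵐ ω ∂ν, A 1 ω * B 0 ω = 1 :=
    ae_eq_one_of_integral_eq_one (hAB 1 0)
      (.of_forall fun ω => (abs_le.mp (abs_mul_le_one (hA 1 ω) (hB 0 ω))).2)
      ((hE_int 1 0).symm.trans hperf)
  rw [hE_int, hE_int, hE_int]
  refine abs_integral_sub_add_integral_le_one (hAB 0 0) (hAB 0 1) (hAB 1 1) ?_
  filter_upwards [hcorr] with ω h
  exact abs_mul_sub_mul_add_mul_le_one (hA 0 ω) (hB 0 ω) (hA 1 ω) (hB 1 ω) h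
end

section
/- For measurable functions f_1, f_2, g_1, g_2 : Ω → [−1,1] and a probability measure ν on Ω, if ∫ f_2 g_1 dν = 1 then |∫ f_1 g_1 dν − ∫ f_1 g_2 dν| + ∫ f_2 g_2 dν ≤ 1. -/
/-!
Perfect correlation forces `f₂ = g₁` almost everywhere: `f₂ g₁ ≤ 1` pointwise and its integral
is `1`, and for values in `[-1, 1]` the product `x y` equals `1` only when `x = y`. Hence
`∫ f₂ g₂ = ∫ g₁ g₂`, and the inequality follows by integrating the pointwise bound
`|f₁ (g₁ - g₂)| ≤ |g₁ - g₂| ≤ 1 - g₁ g₂`.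
-/

open MeasureTheory Set

lemma abs_mul_le_one_of_mem_Icc {x y : ℝ} (hx : x ∈ Icc (-1 : ℝ) 1) (hy : y ∈ Icc (-1 : ℝ) 1) :
    |x * y| ≤ 1 := by
  rw [abs_mul]
  exact mul_le_one₀ (abs_le.2 hx) (abs_nonneg _) (abs_le.2 hy)

lemma eq_of_mul_eq_one_of_mem_Icc {x y : ℝ} (hx : x ∈ Icc (-1 : ℝ) 1)
    (hy : y ∈ Icc (-1 : ℝ) 1) (h : x * y = 1) : x = y := by
  nlinarith [sq_nonneg (x - y), hx.1, hx.2, hy.1, hy.2]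

lemma abs_mul_sub_mul_le_one_sub_mul {a b c : ℝ} (ha : a ∈ Icc (-1 : ℝ) 1)
    (hb : b ∈ Icc (-1 : ℝ) 1) (hc : c ∈ Icc (-1 : ℝ) 1) :
    |a * b - a * c| ≤ 1 - b * c := by
  have hbc : |b - c| ≤ 1 - b * c := abs_le.2
    ⟨by nlinarith [mul_nonneg (neg_le_iff_add_nonneg'.1 hb.1) (sub_nonneg.2 hc.2)],
     by nlinarith [mul_nonneg (sub_nonneg.2 hb.2) (neg_le_iff_add_nonneg'.1 hc.1)]⟩
  calc |a * b - a * c| = |a| * |b - c| := by rw [← mul_sub, abs_mul]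
    _ ≤ |b - c| := mul_le_of_le_one_left (abs_nonneg _) (abs_le.2 ha)
    _ ≤ 1 - b * c := hbc

section Integral

variable {Ω : Type*} [MeasurableSpace Ω] {ν : Measure Ω}

lemma integrable_mul_of_mem_Icc [IsFiniteMeasure ν] {f g : Ω → ℝ} (hfm : Measurable f)
    (hgm : Measurable g) (hf : ∀ ω, f ω ∈ Icc (-1 : ℝ) 1) (hg : ∀ ω, g ω ∈ Icc (-1 : ℝ) 1) :
    Integrable (fun ω => f ω * g ω) ν :=
  .of_bound (hfm.mul hgm).aestronglyMeasurable 1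
    (ae_of_all _ fun ω => abs_mul_le_one_of_mem_Icc (hf ω) (hg ω))

lemma ae_eq_of_integral_mul_eq_one [IsProbabilityMeasure ν] {f g : Ω → ℝ}
    (hf : ∀ ω, f ω ∈ Icc (-1 : ℝ) 1) (hg : ∀ ω, g ω ∈ Icc (-1 : ℝ) 1)
    (h : ∫ ω, f ω * g ω ∂ν = 1) : f =ᵐ[ν] g := by
  have hint : Integrable (fun ω => f ω * g ω) ν :=
    .of_integral_ne_zero (by rw [h]; exact one_ne_zero)
  have hdefect : (fun ω => 1 - f ω * g ω) =ᵐ[ν] 0 := by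
    refine (integral_eq_zero_iff_of_nonneg
      (fun ω => sub_nonneg.2 ((le_abs_self _).trans (abs_mul_le_one_of_mem_Icc (hf ω) (hg ω))))
      ((integrable_const 1).sub hint)).1 ?_
    rw [integral_sub (integrable_const 1) hint, h]
    simp
  filter_upwards [hdefect] with ω hω
  exact eq_of_mul_eq_one_of_mem_Icc (hf ω) (hg ω) (sub_eq_zero.1 hω).symm

lemma abs_integral_mul_sub_integral_mul_le [IsProbabilityMeasure ν] {f g h : Ω → ℝ}
    (hfm : Measurable f) (hgm : Measurable g) (hhm : Measurable h)
    (hf : ∀ ω, f ω ∈ Icc (-1 : ℝ) 1) (hg : ∀ ω, g ω ∈ Icc (-1 : ℝ) 1)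
    (hh : ∀ ω, h ω ∈ Icc (-1 : ℝ) 1) :
    |(∫ ω, f ω * g ω ∂ν) - ∫ ω, f ω * h ω ∂ν| ≤ 1 - ∫ ω, g ω * h ω ∂ν := by
  have hfg := integrable_mul_of_mem_Icc (ν := ν) hfm hgm hf hg
  have hfh := integrable_mul_of_mem_Icc (ν := ν) hfm hhm hf hh
  have hgh := integrable_mul_of_mem_Icc (ν := ν) hgm hhm hg hh
  calc |(∫ ω, f ω * g ω ∂ν) - ∫ ω, f ω * h ω ∂ν|
      = |∫ ω, (f ω * g ω - f ω * h ω) ∂ν| := by rw [integral_sub hfg hfh]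
    _ ≤ ∫ ω, |f ω * g ω - f ω * h ω| ∂ν := abs_integral_le_integral_abs
    _ ≤ ∫ ω, (1 - g ω * h ω) ∂ν :=
        integral_mono (hfg.sub hfh).abs ((integrable_const 1).sub hgh)
          fun ω => abs_mul_sub_mul_le_one_sub_mul (hf ω) (hg ω) (hh ω)
    _ = 1 - ∫ ω, g ω * h ω ∂ν := by
        rw [integral_sub (integrable_const 1) hgh]
        simp

end Integral

theorem stmt_17_general {Ω : Type*} [MeasurableSpace Ω] (ν : Measure Ω)
    [IsProbabilityMeasure ν]
    (f₁ f₂ g₁ g₂ : Ω → ℝ)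
    (hf₁m : Measurable f₁)
    (hg₁m : Measurable g₁) (hg₂m : Measurable g₂)
    (hf₁ : ∀ ω, f₁ ω ∈ Set.Icc (-1 : ℝ) 1) (hf₂ : ∀ ω, f₂ ω ∈ Set.Icc (-1 : ℝ) 1)
    (hg₁ : ∀ ω, g₁ ω ∈ Set.Icc (-1 : ℝ) 1) (hg₂ : ∀ ω, g₂ ω ∈ Set.Icc (-1 : ℝ) 1)
    (hperf : ∫ ω, f₂ ω * g₁ ω ∂ν = 1) :
    |(∫ ω, f₁ ω * g₁ ω ∂ν) - ∫ ω, f₁ ω * g₂ ω ∂ν| + ∫ ω, f₂ ω * g₂ ω ∂ν ≤ 1 := by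
  have hf₂g₁ : f₂ =ᵐ[ν] g₁ := ae_eq_of_integral_mul_eq_one hf₂ hg₁ hperf
  have hswap : ∫ ω, f₂ ω * g₂ ω ∂ν = ∫ ω, g₁ ω * g₂ ω ∂ν :=
    integral_congr_ae (hf₂g₁.mul (ae_eq_refl g₂))
  rw [hswap]
  linarith [abs_integral_mul_sub_integral_mul_le (ν := ν) hf₁m hg₁m hg₂m hf₁ hg₁ hg₂]

/-- Functional form of the original Bell inequality: for measurable functions
`f₁, f₂, g₁, g₂ : Ω → [−1,1]` and a probability measure `ν`, the perfect
correlation condition `∫ f₂ g₁ dν = 1` implies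
`|∫ f₁ g₁ dν − ∫ f₁ g₂ dν| + ∫ f₂ g₂ dν ≤ 1`. -/
theorem stmt_17 {Ω : Type*} [MeasurableSpace Ω] (ν : Measure Ω)
    [IsProbabilityMeasure ν]
    (f₁ f₂ g₁ g₂ : Ω → ℝ)
    (hf₁m : Measurable f₁) (hf₂m : Measurable f₂)
    (hg₁m : Measurable g₁) (hg₂m : Measurable g₂)
    (hf₁ : ∀ ω, f₁ ω ∈ Set.Icc (-1 : ℝ) 1) (hf₂ : ∀ ω, f₂ ω ∈ Set.Icc (-1 : ℝ) 1)
    (hg₁ : ∀ ω, g₁ ω ∈ Set.Icc (-1 : ℝ) 1) (hg₂ : ∀ ω, g₂ ω ∈ Set.Icc (-1 : ℝ) 1)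
    (hperf : ∫ ω, f₂ ω * g₁ ω ∂ν = 1) :
    |(∫ ω, f₁ ω * g₁ ω ∂ν) - ∫ ω, f₁ ω * g₂ ω ∂ν| + ∫ ω, f₂ ω * g₂ ω ∂ν ≤ 1 :=
  stmt_17_general ν f₁ f₂ g₁ g₂ hf₁m hg₁m hg₂m hf₁ hf₂ hg₁ hg₂ hperf
end
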